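/- Let Y_R, Y_S, Y3, X1, X2, X3 be finite discrete random variables with conditional distribution p(y_R, y_S, y3 | x1, x2, x3) = p(y_R | x3) p(y_S, y3 | x1, x2) (semi-orthogonal MARC), and let S1, V2 be additional random variables such that (S1, V2, X1, X2) ↔ X3 ↔ Y_R is a Markov chain and Y_S is a deterministic function of (X1, X2). Then I(X1, X3; (Y_R, Y_S) | S1, V2, X2) ≤ I(X1; Y_S | S1, V2, X2) + I(X3; Y_R). -/

import Mathlib

open scoped BigOperators

set_option synthInstance.maxSize 8192

noncomputable section

/-- Probability that the random variable `X` equals `x`, under pmf `p` on finite `Ω`. -/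
def prEq {Ω α : Type*} [Fintype Ω] [DecidableEq α] (p : Ω → ℝ) (X : Ω → α) (x : α) : ℝ :=
  ∑ ω : Ω, if X ω = x then p ω else 0

/-- Shannon entropy (base 2) of a discrete random variable. -/
def entH {Ω α : Type*} [Fintype Ω] [Fintype α] [DecidableEq α] (p : Ω → ℝ) (X : Ω → α) : ℝ :=
  -∑ x : α, prEq p X x * Real.logb 2 (prEq p X x)

/-- Conditional entropy `H(X | Y)`. -/
def condH {Ω α β : Type*} [Fintype Ω] [Fintype α] [DecidableEq α] [Fintype β] [DecidableEq β]
    (p : Ω → ℝ) (X : Ω → α) (Y : Ω → β) : ℝ :=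
  entH p (fun ω => (X ω, Y ω)) - entH p Y

/-- Conditional mutual information `I(X ; Y | Z)`. -/
def condMI {Ω α β γ : Type*} [Fintype Ω] [Fintype α] [DecidableEq α] [Fintype β] [DecidableEq β]
    [Fintype γ] [DecidableEq γ] (p : Ω → ℝ) (X : Ω → α) (Y : Ω → β) (Z : Ω → γ) : ℝ :=
  condH p X Z + condH p Y Z - condH p (fun ω => (X ω, Y ω)) Z

/-- (Unconditional) mutual information `I(X ; Y)`. -/
def mi2 {Ω α β : Type*} [Fintype Ω] [Fintype α] [DecidableEq α] [Fintype β] [DecidableEq β]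
    (p : Ω → ℝ) (X : Ω → α) (Y : Ω → β) : ℝ :=
  entH p X + entH p Y - entH p (fun ω => (X ω, Y ω))

/-- `p` is a probability mass function on `Ω`. -/
def IsPMF {Ω : Type*} [Fintype Ω] (p : Ω → ℝ) : Prop :=
  (∀ ω, 0 ≤ p ω) ∧ ∑ ω : Ω, p ω = 1

/-- The Markov chain `A ↔ B ↔ C`: `A` and `C` are conditionally independent given `B`. -/
def MarkovChain {Ω α β γ : Type*} [Fintype Ω] [DecidableEq α] [DecidableEq β] [DecidableEq γ]
    (p : Ω → ℝ) (A : Ω → α) (B : Ω → β) (C : Ω → γ) : Prop :=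
  ∀ a b c, prEq p (fun ω => (A ω, B ω, C ω)) (a, b, c) * prEq p B b
    = prEq p (fun ω => (A ω, B ω)) (a, b) * prEq p (fun ω => (B ω, C ω)) (b, c)

/-- Hirschfeld–Gebelein–Rényi maximal correlation of `X` and `Y`
(with the convention `sSup ∅ = 0` in `ℝ`). -/
def maxCorr {Ω α β : Type*} [Fintype Ω] (p : Ω → ℝ) (X : Ω → α) (Y : Ω → β) : ℝ :=
  sSup {r : ℝ | ∃ f : α → ℝ, ∃ g : β → ℝ,
    (∑ ω : Ω, p ω * f (X ω)) = 0 ∧ (∑ ω : Ω, p ω * g (Y ω)) = 0 ∧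
    (∑ ω : Ω, p ω * (f (X ω)) ^ 2) = 1 ∧ (∑ ω : Ω, p ω * (g (Y ω)) ^ 2) = 1 ∧
    r = ∑ ω : Ω, p ω * f (X ω) * g (Y ω)}

/-!
Write `U = (S1, V2, X1, X2)` and `W = (S1, V2, X2)` and expand every mutual information into joint
entropies. Since `YS` is a function of `(X1, X2)`, adjoining `YS` to a tuple that determines `U`
does not change its entropy; the Markov chain `U ↔ X3 ↔ YR` gives
`H(U, X3, YR) = H(U, X3) + H(X3, YR) - H(X3)`. After these substitutions the right side minus the
left side is `I(YS, W; YR)`, which is nonnegative.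
-/

open Real Finset

section Atoms
variable {Ω α β : Type*} [Fintype Ω] {p : Ω → ℝ}

def atomProb [DecidableEq α] (p : Ω → ℝ) (X : Ω → α) (ω : Ω) : ℝ :=
  prEq p X (X ω)

lemma prEq_nonneg [DecidableEq α] (hp : ∀ ω, 0 ≤ p ω) (X : Ω → α) (x : α) :
    0 ≤ prEq p X x :=
  sum_nonneg fun ω _ => by split_ifs <;> simp [hp ω]

lemma le_atomProb [DecidableEq α] (hp : ∀ ω, 0 ≤ p ω) (X : Ω → α) (ω : Ω) :
    p ω ≤ atomProb p X ω := by
  unfold atomProb prEq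
  simpa using single_le_sum (f := fun ω' => if X ω' = X ω then p ω' else 0)
    (fun ω' _ => by split_ifs <;> simp [hp ω']) (mem_univ ω)

lemma atomProb_pos [DecidableEq α] (hp : ∀ ω, 0 ≤ p ω) {ω : Ω} (hω : 0 < p ω) (X : Ω → α) :
    0 < atomProb p X ω :=
  hω.trans_le (le_atomProb hp X ω)

lemma atomProb_congr [DecidableEq α] [DecidableEq β] {X : Ω → α} {Y : Ω → β} {ω : Ω}
    (h : ∀ ω', X ω' = X ω ↔ Y ω' = Y ω) : atomProb p X ω = atomProb p Y ω :=
  sum_congr rfl fun ω' _ => if_congr (h ω') rfl rfl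

lemma sum_prEq_mul [Fintype α] [DecidableEq α] (X : Ω → α) (g : α → ℝ) :
    ∑ x, prEq p X x * g x = ∑ ω, p ω * g (X ω) := by
  simp only [prEq, sum_mul, ite_mul, zero_mul]
  rw [sum_comm]
  simp

lemma sum_prEq [Fintype α] [DecidableEq α] (X : Ω → α) : ∑ x, prEq p X x = ∑ ω, p ω := by
  simpa using sum_prEq_mul (p := p) X 1

lemma sum_prEq_prod_left [Fintype α] [DecidableEq α] [DecidableEq β] (X : Ω → α) (Y : Ω → β)
    (y : β) : ∑ x, prEq p (fun ω => (X ω, Y ω)) (x, y) = prEq p Y y := by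
  simp only [prEq]
  rw [sum_comm]
  refine sum_congr rfl fun ω _ => ?_
  by_cases h : Y ω = y <;> simp [Prod.ext_iff, h]

end Atoms

section InformationDensity
variable {Ω α β γ : Type*} [Fintype Ω] [DecidableEq α] [DecidableEq β] [DecidableEq γ]
  {p : Ω → ℝ}

/-- `log (condMIRatio p X Y Z ω)` is the conditional information density `i(X; Y | Z)` at `ω`,
in nats. -/
def condMIRatio (p : Ω → ℝ) (X : Ω → α) (Y : Ω → β) (Z : Ω → γ) (ω : Ω) : ℝ :=
  atomProb p (fun ω => ((X ω, Y ω), Z ω)) ω * atomProb p Z ω /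
    (atomProb p (fun ω => (X ω, Z ω)) ω * atomProb p (fun ω => (Y ω, Z ω)) ω)

lemma condMIRatio_pos (hp : ∀ ω, 0 ≤ p ω) {ω : Ω} (hω : 0 < p ω) (X : Ω → α) (Y : Ω → β)
    (Z : Ω → γ) : 0 < condMIRatio p X Y Z ω :=
  div_pos (mul_pos (atomProb_pos hp hω _) (atomProb_pos hp hω _))
    (mul_pos (atomProb_pos hp hω _) (atomProb_pos hp hω _))

lemma condMIRatio_eq_one_of_markovChain (hp : ∀ ω, 0 ≤ p ω) {A : Ω → α} {B : Ω → γ}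
    {C : Ω → β} (h : MarkovChain p A B C) {ω : Ω} (hω : 0 < p ω) :
    condMIRatio p A C B ω = 1 := by
  have hfactor : atomProb p (fun ω => ((A ω, C ω), B ω)) ω * atomProb p B ω
      = atomProb p (fun ω => (A ω, B ω)) ω * atomProb p (fun ω => (C ω, B ω)) ω := by
    rw [atomProb_congr (Y := fun ω => (A ω, B ω, C ω)) fun _ => by simp only [Prod.ext_iff]; tauto,
      atomProb_congr (X := fun ω => (C ω, B ω)) (Y := fun ω => (B ω, C ω))
        fun _ => by simp only [Prod.ext_iff]; tauto]
    exact h _ _ _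
  rw [condMIRatio, hfactor, div_self (mul_pos (atomProb_pos hp hω _) (atomProb_pos hp hω _)).ne']

end InformationDensity

section Entropy
variable {Ω α β γ : Type*} [Fintype Ω] [Fintype α] [DecidableEq α] [Fintype β] [DecidableEq β]
  [Fintype γ] [DecidableEq γ] {p : Ω → ℝ}

lemma entH_eq_sum_log (X : Ω → α) :
    entH p X = -(∑ ω, p ω * log (atomProb p X ω)) / log 2 := by
  unfold atomProb
  rw [← sum_prEq_mul X (fun x => log (prEq p X x)), entH, neg_div, sum_div]
  simp only [logb, mul_div_assoc]

lemma entH_congr {X : Ω → α} {Y : Ω → β} (h : ∀ ω ω', X ω' = X ω ↔ Y ω' = Y ω) :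
    entH p X = entH p Y := by
  simp only [entH_eq_sum_log, atomProb_congr (h _)]

lemma condMI_eq_sum_log (hp : ∀ ω, 0 ≤ p ω) (X : Ω → α) (Y : Ω → β) (Z : Ω → γ) :
    condMI p X Y Z = (∑ ω, p ω * log (condMIRatio p X Y Z ω)) / log 2 := by
  have hsplit : ∀ ω, p ω * log (condMIRatio p X Y Z ω)
      = p ω * log (atomProb p (fun ω => ((X ω, Y ω), Z ω)) ω) + p ω * log (atomProb p Z ω)
        - p ω * log (atomProb p (fun ω => (X ω, Z ω)) ω)
        - p ω * log (atomProb p (fun ω => (Y ω, Z ω)) ω) := by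
    intro ω
    rcases (hp ω).eq_or_lt with h0 | hpos
    · simp [← h0]
    · have hXYZ := atomProb_pos hp hpos (fun ω => ((X ω, Y ω), Z ω))
      have hZ := atomProb_pos hp hpos Z
      have hXZ := atomProb_pos hp hpos (fun ω => (X ω, Z ω))
      have hYZ := atomProb_pos hp hpos (fun ω => (Y ω, Z ω))
      rw [condMIRatio, log_div (mul_pos hXYZ hZ).ne' (mul_pos hXZ hYZ).ne',
        log_mul hXYZ.ne' hZ.ne', log_mul hXZ.ne' hYZ.ne']
      ring
  simp only [condMI, condH, entH_eq_sum_log, hsplit, sum_add_distrib, sum_sub_distrib]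
  ring

lemma sum_prEq_mul_prEq_div_prEq (hp : IsPMF p) (X : Ω → α) (Y : Ω → β) (Z : Ω → γ) :
    ∑ q : (α × β) × γ, prEq p (fun ω => (X ω, Z ω)) (q.1.1, q.2) *
      prEq p (fun ω => (Y ω, Z ω)) (q.1.2, q.2) / prEq p Z q.2 = 1 := by
  rw [Fintype.sum_prod_type, sum_comm, ← hp.2, ← sum_prEq Z]
  refine sum_congr rfl fun z _ => ?_
  simp only [Fintype.sum_prod_type, ← sum_div, ← sum_mul, ← mul_sum, sum_prEq_prod_left]
  exact mul_self_div_self _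

/-- The left side is the mass that the conditionally independent coupling
`P(x, z) P(y, z) / P(z)` puts on the support of `(X, Y, Z)`. -/
lemma sum_mul_inv_condMIRatio_le_one (hp : IsPMF p) (X : Ω → α) (Y : Ω → β) (Z : Ω → γ) :
    ∑ ω, p ω * (condMIRatio p X Y Z ω)⁻¹ ≤ 1 := by
  set T := prEq p (fun ω => ((X ω, Y ω), Z ω))
  set Q : (α × β) × γ → ℝ := fun q => prEq p (fun ω => (X ω, Z ω)) (q.1.1, q.2) *
      prEq p (fun ω => (Y ω, Z ω)) (q.1.2, q.2) / prEq p Z q.2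
  have hQ : ∀ q, 0 ≤ Q q := fun q =>
    div_nonneg (mul_nonneg (prEq_nonneg hp.1 _ _) (prEq_nonneg hp.1 _ _)) (prEq_nonneg hp.1 _ _)
  simp only [condMIRatio, inv_div]
  calc _ = ∑ q, T q * (prEq p (fun ω => (X ω, Z ω)) (q.1.1, q.2) *
        prEq p (fun ω => (Y ω, Z ω)) (q.1.2, q.2) / (T q * prEq p Z q.2)) :=
        (sum_prEq_mul _ _).symm
    _ ≤ ∑ q, Q q := sum_le_sum fun q _ => by
        rcases eq_or_ne (T q) 0 with h0 | hne
        · simpa [h0] using hQ q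
        · rw [← mul_div_assoc, mul_div_mul_left _ _ hne]
    _ = 1 := sum_prEq_mul_prEq_div_prEq hp X Y Z

lemma condMI_nonneg (hp : IsPMF p) (X : Ω → α) (Y : Ω → β) (Z : Ω → γ) :
    0 ≤ condMI p X Y Z := by
  rw [condMI_eq_sum_log hp.1]
  refine div_nonneg ?_ (log_nonneg one_le_two)
  have hterm : ∀ ω, p ω * (1 - (condMIRatio p X Y Z ω)⁻¹) ≤ p ω * log (condMIRatio p X Y Z ω) := by
    intro ω
    rcases (hp.1 ω).eq_or_lt with h0 | hpos
    · simp [← h0]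
    · exact mul_le_mul_of_nonneg_left
        (one_sub_inv_le_log_of_pos (condMIRatio_pos hp.1 hpos X Y Z)) hpos.le
  calc (0 : ℝ) ≤ ∑ ω, p ω * (1 - (condMIRatio p X Y Z ω)⁻¹) := by
        simp only [mul_sub, mul_one, sum_sub_distrib, hp.2]
        linarith [sum_mul_inv_condMIRatio_le_one hp X Y Z]
    _ ≤ _ := sum_le_sum fun ω _ => hterm ω

lemma condMI_eq_zero_of_markovChain (hp : ∀ ω, 0 ≤ p ω) {A : Ω → α} {B : Ω → γ} {C : Ω → β}
    (h : MarkovChain p A B C) : condMI p A C B = 0 := by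
  rw [condMI_eq_sum_log hp, sum_eq_zero, zero_div]
  intro ω _
  rcases (hp ω).eq_or_lt with h0 | hpos
  · simp [← h0]
  · rw [condMIRatio_eq_one_of_markovChain hp h hpos, log_one, mul_zero]

lemma entH_const_unit (hp : IsPMF p) : entH p (fun _ : Ω => ()) = 0 := by
  have h1 : ∀ ω, atomProb p (fun _ : Ω => ()) ω = 1 := fun _ => by simpa [atomProb, prEq] using hp.2
  simp [entH_eq_sum_log, h1]

lemma mi2_nonneg (hp : IsPMF p) (X : Ω → α) (Y : Ω → β) : 0 ≤ mi2 p X Y := by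
  have h := condMI_nonneg hp X Y (fun _ => ())
  have hX : entH p (fun ω => (X ω, ())) = entH p X := entH_congr fun _ _ => by simp
  have hY : entH p (fun ω => (Y ω, ())) = entH p Y := entH_congr fun _ _ => by simp
  have hXY : entH p (fun ω => ((X ω, Y ω), ())) = entH p (fun ω => (X ω, Y ω)) :=
    entH_congr fun _ _ => by simp
  simp only [condMI, condH, hX, hY, hXY, entH_const_unit hp] at h
  simp only [mi2]
  linarith

lemma condH_nonneg (hp : IsPMF p) (Y : Ω → α) (Z : Ω → γ) : 0 ≤ condH p Y Z := by
  have h := condMI_nonneg hp Y Y Z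
  have hYYZ : entH p (fun ω => ((Y ω, Y ω), Z ω)) = entH p (fun ω => (Y ω, Z ω)) :=
    entH_congr fun _ _ => by simp only [Prod.ext_iff]; tauto
  simp only [condMI, condH, hYYZ] at h ⊢
  linarith

lemma condH_le_of_comp (hp : IsPMF p) (Y : Ω → α) (Z : Ω → γ) (f : γ → β) :
    condH p Y Z ≤ condH p Y (fun ω => f (Z ω)) := by
  have h := condMI_nonneg hp Y Z (fun ω => f (Z ω))
  have hZ : entH p (fun ω => (Z ω, f (Z ω))) = entH p Z :=
    entH_congr fun _ _ => by simp only [Prod.ext_iff]; aesop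
  have hYZ : entH p (fun ω => ((Y ω, Z ω), f (Z ω))) = entH p (fun ω => (Y ω, Z ω)) :=
    entH_congr fun _ _ => by simp only [Prod.ext_iff]; aesop
  simp only [condMI, condH, hZ, hYZ] at h ⊢
  linarith

lemma condH_eq_zero_of_comp (hp : IsPMF p) {Y : Ω → α} {A : Ω → β} (hY : condH p Y A = 0)
    (Z : Ω → γ) (f : γ → β) (hA : ∀ ω, A ω = f (Z ω)) : condH p Y Z = 0 := by
  have h := condH_le_of_comp hp Y Z f
  rw [← funext hA, hY] at h
  exact le_antisymm h (condH_nonneg hp Y Z)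

end Entropy

theorem stmt15_general {Ω YRt YSt X1t X2t X3t S1t V2t : Type*} [Fintype Ω]
    [Fintype YRt] [DecidableEq YRt] [Fintype YSt] [DecidableEq YSt]
    [Fintype X1t] [DecidableEq X1t] [Fintype X2t] [DecidableEq X2t]
    [Fintype X3t] [DecidableEq X3t] [Fintype S1t] [DecidableEq S1t]
    [Fintype V2t] [DecidableEq V2t]
    (p : Ω → ℝ) (hp : IsPMF p)
    (YR : Ω → YRt) (YS : Ω → YSt) (X1 : Ω → X1t) (X2 : Ω → X2t) (X3 : Ω → X3t)
    (S1 : Ω → S1t) (V2 : Ω → V2t)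
    (hmc2 : MarkovChain p (fun ω => (S1 ω, V2 ω, X1 ω, X2 ω)) X3 YR)
    (hdet : condH p YS (fun ω => (X1 ω, X2 ω)) = 0) :
    condMI p (fun ω => (X1 ω, X3 ω)) (fun ω => (YR ω, YS ω))
        (fun ω => (S1 ω, V2 ω, X2 ω))
      ≤ condMI p X1 YS (fun ω => (S1 ω, V2 ω, X2 ω)) + mi2 p X3 YR := by
  set U := fun ω => (S1 ω, V2 ω, X1 ω, X2 ω)
  set W := fun ω => (S1 ω, V2 ω, X2 ω)
  have hdetU := condH_eq_zero_of_comp hp hdet U (fun u => (u.2.2.1, u.2.2.2)) fun _ => rfl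
  have hdetUYRX3 := condH_eq_zero_of_comp hp hdet (fun ω => ((U ω, YR ω), X3 ω))
    (fun q => (q.1.1.2.2.1, q.1.1.2.2.2)) fun _ => rfl
  have hmarkov := condMI_eq_zero_of_markovChain hp.1 hmc2
  have hinfo := mi2_nonneg hp (fun ω => (YS ω, W ω)) YR
  have hUX3 : entH p (fun ω => ((X1 ω, X3 ω), W ω)) = entH p (fun ω => (U ω, X3 ω)) :=
    entH_congr fun _ _ => by simp only [U, W, Prod.ext_iff]; tauto
  have hall : entH p (fun ω => (((X1 ω, X3 ω), (YR ω, YS ω)), W ω))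
      = entH p (fun ω => (YS ω, ((U ω, YR ω), X3 ω))) :=
    entH_congr fun _ _ => by simp only [U, W, Prod.ext_iff]; tauto
  have hU : entH p (fun ω => (X1 ω, W ω)) = entH p U :=
    entH_congr fun _ _ => by simp only [U, W, Prod.ext_iff]; tauto
  have hYSU : entH p (fun ω => ((X1 ω, YS ω), W ω)) = entH p (fun ω => (YS ω, U ω)) :=
    entH_congr fun _ _ => by simp only [U, W, Prod.ext_iff]; tauto
  have hX3YR : entH p (fun ω => (X3 ω, YR ω)) = entH p (fun ω => (YR ω, X3 ω)) :=
    entH_congr fun _ _ => by simp only [Prod.ext_iff]; tauto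
  have hYSWYR : entH p (fun ω => ((YS ω, W ω), YR ω)) = entH p (fun ω => ((YR ω, YS ω), W ω)) :=
    entH_congr fun _ _ => by simp only [Prod.ext_iff]; tauto
  simp only [condMI, condH, mi2] at hdetU hdetUYRX3 hmarkov hinfo ⊢
  rw [hUX3, hall, hU, hYSU, hX3YR]
  rw [hYSWYR] at hinfo
  linarith

theorem stmt15 {Ω YRt YSt X1t X2t X3t S1t V2t : Type*} [Fintype Ω]
    [Fintype YRt] [DecidableEq YRt] [Fintype YSt] [DecidableEq YSt]
    [Fintype X1t] [DecidableEq X1t] [Fintype X2t] [DecidableEq X2t]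
    [Fintype X3t] [DecidableEq X3t] [Fintype S1t] [DecidableEq S1t]
    [Fintype V2t] [DecidableEq V2t]
    (p : Ω → ℝ) (hp : IsPMF p)
    (YR : Ω → YRt) (YS : Ω → YSt) (X1 : Ω → X1t) (X2 : Ω → X2t) (X3 : Ω → X3t)
    (S1 : Ω → S1t) (V2 : Ω → V2t)
    (hmc1 : MarkovChain p YS (fun ω => (S1 ω, V2 ω, X1 ω, X2 ω)) YR)
    (hmc2 : MarkovChain p (fun ω => (S1 ω, V2 ω, X1 ω, X2 ω)) X3 YR)
    (hdet : condH p YS (fun ω => (X1 ω, X2 ω)) = 0) :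
    condMI p (fun ω => (X1 ω, X3 ω)) (fun ω => (YR ω, YS ω))
        (fun ω => (S1 ω, V2 ω, X2 ω))
      ≤ condMI p X1 YS (fun ω => (S1 ω, V2 ω, X2 ω)) + mi2 p X3 YR :=
  stmt15_general p hp YR YS X1 X2 X3 S1 V2 hmc2 hdet
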